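/- arXiv:2309.12655 — 12 statements merged into one kernel-verified Lean document; each statement's English description precedes it below -/
import Mathlib

section
/- Natural revision satisfies the revised conditional: for every connected preorder C and conditional P>A with P∧A satisfiable, the order C nat(P>A) satisfies P>A, i.e., every minimal model of P∧A in C nat(P>A) is strictly below every model of P∧¬A. -/
open Classical

/- Models are elements of a finite type `M`; propositional formulas are identified with
their sets of models (`Set M`).  A connected preorder (ordered partition
`[C(0),…,C(m)]`, classes possibly empty) is represented by its rank function
`r : M → ℕ`, where `r I` is the index of the class of `I`.  Equality of orders means
equality of the induced binary relations (`sameOrd`). -/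

/-- least class index containing a model of `F` -/
noncomputable def minidx {M : Type*} (r : M → ℕ) (F : Set M) : ℕ := sInf (r '' F)

/-- greatest class index containing a model of `F` -/
noncomputable def maxidx {M : Type*} (r : M → ℕ) (F : Set M) : ℕ := sSup (r '' F)

/-- propositional natural revision:
`C nat(A) = [C(minidx A)∩A, C(0),…,C(minidx A−1), C(minidx A)∖A, C(minidx A+1),…,C(m)]` -/
noncomputable def natSimple {M : Type*} (r : M → ℕ) (A : Set M) : M → ℕ :=
  fun I => if I ∈ A ∧ r I = minidx r A then 0 else r I + 1

/-- conditional natural revision: the models of `P∧¬A` in classes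
`minidx(P)..minidx(P∧A)` are dropped below the other models of those classes. -/
noncomputable def natRev {M : Type*} (r : M → ℕ) (P A : Set M) : M → ℕ := fun I =>
  if r I < minidx r P then r I
  else if r I ≤ minidx r (P ∩ A) then
    (if I ∈ P ∩ Aᶜ then r I + (minidx r (P ∩ A) - minidx r P + 1) else r I)
  else r I + (minidx r (P ∩ A) - minidx r P + 1)

/-- uncontingent revision: the models of `P∧¬A` in classes
`minidx(P)..maxidx(P∧A)` are dropped below the other models of those classes. -/
noncomputable def uncRev {M : Type*} (r : M → ℕ) (P A : Set M) : M → ℕ := fun I =>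
  if r I < minidx r P then r I
  else if r I ≤ maxidx r (P ∩ A) then
    (if I ∈ P ∩ Aᶜ then r I + (maxidx r (P ∩ A) - minidx r P + 1) else r I)
  else r I + (maxidx r (P ∩ A) - minidx r P + 1)

/-- lexicographic revision: `C lex(F) = [C(0)∩F,…,C(m)∩F, C(0)∖F,…,C(m)∖F]` -/
noncomputable def lexRev {M : Type*} [Fintype M] (r : M → ℕ) (F : Set M) : M → ℕ := fun I =>
  if I ∈ F then r I else r I + (Finset.univ.sup r + 1)

/-- line-down revision: the minimal models of `P∧A` are lifted to a new class just
above class `minidx(P∧¬A)`; all other models keep their classes. -/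
noncomputable def dowRev {M : Type*} (r : M → ℕ) (P A : Set M) : M → ℕ := fun I =>
  if minidx r (P ∩ A) < minidx r (P ∩ Aᶜ) then r I
  else if I ∈ P ∩ A ∧ r I = minidx r (P ∩ A) then minidx r (P ∩ Aᶜ)
  else if r I < minidx r (P ∩ Aᶜ) then r I
  else r I + 1

/-- an order satisfies the conditional `P>A` iff every minimal model of `P∧A`
is strictly below every model of `P∧¬A` -/
def satisfiesCond {M : Type*} (r : M → ℕ) (P A : Set M) : Prop :=
  ∀ I ∈ P ∩ A, (∀ J ∈ P ∩ A, r I ≤ r J) → ∀ K ∈ P ∩ Aᶜ, r I < r K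

/-- the order viewed as a set of pairs `I ≤ J` -/
def ordRel {M : Type*} (r : M → ℕ) : Set (M × M) := {p | r p.1 ≤ r p.2}

/-- difference of two orders: symmetric difference of their sets of pairs -/
def diffOrd {M : Type*} (r r' : M → ℕ) : Set (M × M) := symmDiff (ordRel r) (ordRel r')

/-- equality of the induced connected preorders -/
def sameOrd {M : Type*} (r r' : M → ℕ) : Prop := ∀ I J : M, (r I ≤ r J ↔ r' I ≤ r' J)

/- After revision, a model of `P ∧ A` of class `n := minidx(P ∧ A)` keeps class `n`, while every
model of `P ∧ ¬A` lands strictly above `n`; so the minimal models of `P ∧ A` lie below all models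
of `P ∧ ¬A`. -/

theorem minidx_le_of_mem {M : Type*} (r : M → ℕ) {F : Set M} {I : M} (hI : I ∈ F) :
    minidx r F ≤ r I :=
  Nat.sInf_le ⟨I, hI, rfl⟩

theorem exists_mem_rank_eq_minidx {M : Type*} (r : M → ℕ) {F : Set M} (hF : F.Nonempty) :
    ∃ I ∈ F, r I = minidx r F :=
  Nat.sInf_mem (hF.image r)

theorem natRev_eq_of_mem_of_le_minidx {M : Type*} (r : M → ℕ) {P A : Set M} {I : M}
    (hA : I ∈ A) (hle : r I ≤ minidx r (P ∩ A)) : natRev r P A I = r I := by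
  have hnot : I ∉ P ∩ Aᶜ := fun h => h.2 hA
  simp [natRev, hle, hnot]

theorem minidx_inter_lt_natRev {M : Type*} (r : M → ℕ) {P A : Set M} {K : M}
    (hK : K ∈ P ∩ Aᶜ) : minidx r (P ∩ A) < natRev r P A K := by
  have hP : minidx r P ≤ r K := minidx_le_of_mem r hK.1
  unfold natRev
  split_ifs <;> omega

theorem natural_satisfies_general {M : Type*} (r : M → ℕ) (P A : Set M)
    (h : (P ∩ A).Nonempty) :
    satisfiesCond (natRev r P A) P A := by
  intro I _ hmin K hK
  obtain ⟨I₀, hI₀, hrI₀⟩ := exists_mem_rank_eq_minidx r h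
  have hI₀_fixed : natRev r P A I₀ = minidx r (P ∩ A) :=
    (natRev_eq_of_mem_of_le_minidx r hI₀.2 hrI₀.le).trans hrI₀
  calc natRev r P A I ≤ natRev r P A I₀ := hmin I₀ hI₀
    _ = minidx r (P ∩ A) := hI₀_fixed
    _ < natRev r P A K := minidx_inter_lt_natRev r hK

/-- natural revision satisfies the revised conditional. -/
theorem natural_satisfies {M : Type*} [Fintype M] (r : M → ℕ) (P A : Set M)
    (h : (P ∩ A).Nonempty) :
    satisfiesCond (natRev r P A) P A :=
  natural_satisfies_general r P A h
end

section
/- Natural revision is a minimal change: no connected preorder satisfying P>A is strictly closer to C than C nat(P>A), where closeness is measured by set containment of the symmetric difference of the order relations. -/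
open Classical

/-- no connected preorder satisfying `P>A` is strictly closer to `C` than
the natural revision `C nat(P>A)`. -/
theorem natural_minimal {M : Type*} [Fintype M] (r : M → ℕ) (P A : Set M)
    (h : (P ∩ A).Nonempty) :
    ¬ ∃ r' : M → ℕ, satisfiesCond r' P A ∧ diffOrd r' r ⊂ diffOrd (natRev r P A) r := by
  rintro ⟨r', hcond, hss⟩
  set n := natRev r P A with hn
  set mp := minidx r P with hmpdef
  set ma := minidx r (P ∩ A) with hmadef
  set k := ma - mp + 1 with hkdef
  have hmamem : ma ∈ r '' (P ∩ A) := by rw [hmadef]; exact Nat.sInf_mem (h.image r)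
  obtain ⟨J0, hJ0PA, hJ0r⟩ := hmamem
  have hma_le : ∀ J ∈ P ∩ A, ma ≤ r J := by
    intro J hJ; rw [hmadef]; exact Nat.sInf_le ⟨J, hJ, rfl⟩
  have hmp_le : ∀ I ∈ P, mp ≤ r I := by
    intro I hI; rw [hmpdef]; exact Nat.sInf_le ⟨I, hI, rfl⟩
  have hmpma : mp ≤ ma := by have := hmp_le J0 hJ0PA.1; omega
  -- value description of `n`
  have hval : ∀ I : M, (n I = r I ∧ r I ≤ ma ∧ (r I < mp ∨ I ∉ P ∩ Aᶜ)) ∨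
      (n I = r I + k ∧ ((mp ≤ r I ∧ r I ≤ ma ∧ I ∈ P ∩ Aᶜ) ∨ ma < r I)) := by
    intro I
    have hnI : n I = if r I < mp then r I else if r I ≤ ma then
        (if I ∈ P ∩ Aᶜ then r I + k else r I) else r I + k := rfl
    by_cases h1 : r I < mp
    · left; refine ⟨by simp [hnI, h1], by omega, Or.inl h1⟩
    · by_cases h2 : r I ≤ ma
      · by_cases h3 : I ∈ P ∩ Aᶜ
        · right; exact ⟨by simp [hnI, h1, h2, h3], Or.inl ⟨by omega, h2, h3⟩⟩
        · left; exact ⟨by simp [hnI, h1, h2, h3], h2, Or.inr h3⟩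
      · right; exact ⟨by simp [hnI, h1, h2], Or.inr (by omega)⟩
  -- `n` agrees with `r` on pairs where neither component is "bad"
  have hndiff : ∀ I J : M, (r I < mp ∨ I ∉ P ∩ Aᶜ) → (r J < mp ∨ J ∉ P ∩ Aᶜ) →
      (I, J) ∉ diffOrd n r := by
    intro I J hI hJ hmem
    rw [diffOrd, Set.mem_symmDiff] at hmem
    simp only [ordRel, Set.mem_setOf_eq] at hmem
    rcases hval I with ⟨hIe, hIle, _⟩ | ⟨hIe, hIb⟩
    · rcases hval J with ⟨hJe, hJle, _⟩ | ⟨hJe, hJb⟩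
      · omega
      · rcases hJb with ⟨h1, h2, h3⟩ | hJb
        · rcases hJ with hJ | hJ
          · omega
          · exact hJ h3
        · omega
    · rcases hIb with ⟨h1, h2, h3⟩ | hIb
      · rcases hI with hI | hI
        · omega
        · exact hI h3
      · rcases hval J with ⟨hJe, hJle, _⟩ | ⟨hJe, hJb⟩
        · omega
        · rcases hJb with ⟨h1, h2, h3⟩ | hJb
          · rcases hJ with hJ | hJ
            · omega
            · exact hJ h3
          · omega
  -- hence `r'` agrees with `r` on such pairs
  have hagree : ∀ I J : M, (r I < mp ∨ I ∉ P ∩ Aᶜ) → (r J < mp ∨ J ∉ P ∩ Aᶜ) →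
      (r' I ≤ r' J ↔ r I ≤ r J) := by
    intro I J hI hJ
    have h2 : (I, J) ∉ diffOrd r' r := fun hm => hndiff I J hI hJ (hss.1 hm)
    rw [diffOrd, Set.mem_symmDiff] at h2
    simp only [ordRel, Set.mem_setOf_eq] at h2
    push_neg at h2
    exact ⟨h2.1, h2.2⟩
  have hJ0nb : r J0 < mp ∨ J0 ∉ P ∩ Aᶜ := Or.inr fun hb => hb.2 hJ0PA.2
  -- J0 is r'-minimal in P ∩ A
  have hJ0min : ∀ J ∈ P ∩ A, r' J0 ≤ r' J := by
    intro J hJ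
    have := hma_le J hJ
    exact (hagree J0 J hJ0nb (Or.inr fun hb => hb.2 hJ.2)).mpr (by omega)
  -- key: any "good" model is strictly r'-below any "bad" model
  have hB : ∀ G, r G ≤ ma → (r G < mp ∨ G ∉ P ∩ Aᶜ) → ∀ B ∈ P ∩ Aᶜ, r' G < r' B := by
    intro G hGle hGnb B hBmem
    have h1 : r' G ≤ r' J0 := (hagree G J0 hGnb hJ0nb).mpr (by omega)
    have h2 : r' J0 < r' B := hcond J0 hJ0PA hJ0min B hBmem
    omega
  -- show `diffOrd n r ⊆ diffOrd r' r`, contradicting strictness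
  apply hss.2
  rintro ⟨I, J⟩ hp
  rw [diffOrd, Set.mem_symmDiff] at hp ⊢
  simp only [ordRel, Set.mem_setOf_eq] at hp ⊢
  rcases hp with ⟨hnle, hrn⟩ | ⟨hrle, hnn⟩
  · -- n I ≤ n J and r J < r I : then I good, J bad
    rcases hval I with ⟨hIe, hIle, hInb⟩ | ⟨hIe, hIb⟩
    · rcases hval J with ⟨hJe, hJle, _⟩ | ⟨hJe, hJb⟩
      · omega
      · have hJbad : mp ≤ r J ∧ r J ≤ ma ∧ J ∈ P ∩ Aᶜ := by
          rcases hJb with hJb | hJb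
          · exact hJb
          · exfalso; omega
        have hInb' : r I < mp ∨ I ∉ P ∩ Aᶜ := hInb
        have : r' I < r' J := hB I hIle hInb J hJbad.2.2
        exact Or.inl ⟨le_of_lt this, hrn⟩
    · rcases hval J with ⟨hJe, hJle, _⟩ | ⟨hJe, hJb⟩
      · omega
      · omega
  · -- r I ≤ r J and n J < n I : then J good, I bad
    rcases hval I with ⟨hIe, hIle, _⟩ | ⟨hIe, hIb⟩
    · rcases hval J with ⟨hJe, hJle, _⟩ | ⟨hJe, hJb⟩ <;> omega
    · rcases hIb with hIbad | hIhigh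
      · rcases hval J with ⟨hJe, hJle, hJnb⟩ | ⟨hJe, hJb⟩
        · have : r' J < r' I := hB J hJle hJnb I hIbad.2.2
          exact Or.inr ⟨hrle, by omega⟩
        · rcases hJb with hJb | hJb <;> omega
      · rcases hval J with ⟨hJe, hJle, _⟩ | ⟨hJe, hJb⟩ <;> omega
end

section
/- Natural revision preserves conditionals: for any two models I, J that either both satisfy ¬P, both satisfy P∧A, or both satisfy P∧¬A, we have I ≤ J in C if and only if I ≤ J in C nat(P>A). -/
open Classical

/-- natural revision preserves conditionals. -/
theorem natural_preserves {M : Type*} [Fintype M] (r : M → ℕ) (P A : Set M) (I J : M)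
    (h : (I ∈ Pᶜ ∧ J ∈ Pᶜ) ∨ (I ∈ P ∩ A ∧ J ∈ P ∩ A) ∨ (I ∈ P ∩ Aᶜ ∧ J ∈ P ∩ Aᶜ)) :
    (r I ≤ r J ↔ natRev r P A I ≤ natRev r P A J) := by
  have hPI : I ∈ P → minidx r P ≤ r I := fun hh => Nat.sInf_le ⟨I, hh, rfl⟩
  have hPJ : J ∈ P → minidx r P ≤ r J := fun hh => Nat.sInf_le ⟨J, hh, rfl⟩
  have hPAI : I ∈ P ∩ A → minidx r (P ∩ A) ≤ r I := fun hh => Nat.sInf_le ⟨I, hh, rfl⟩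
  have hPAJ : J ∈ P ∩ A → minidx r (P ∩ A) ≤ r J := fun hh => Nat.sInf_le ⟨J, hh, rfl⟩
  unfold natRev
  rcases h with ⟨hI, hJ⟩ | ⟨hI, hJ⟩ | ⟨hI, hJ⟩
  · have h1 : I ∉ P ∩ Aᶜ := fun hh => hI hh.1
    have h2 : J ∉ P ∩ Aᶜ := fun hh => hJ hh.1
    simp only [h1, h2, if_false]
    split_ifs <;> omega
  · have h1 : I ∉ P ∩ Aᶜ := fun hh => hh.2 hI.2
    have h2 : J ∉ P ∩ Aᶜ := fun hh => hh.2 hJ.2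
    have := hPI hI.1; have := hPJ hJ.1
    have := hPAI hI; have := hPAJ hJ
    simp only [h1, h2, if_false]
    split_ifs <;> omega
  · have := hPI hI.1; have := hPJ hJ.1
    simp only [hI, hJ, if_true]
    split_ifs <;> omega
end

section
/- On the order with classes [{xy, x¬y}, {¬xy, ¬x¬y}], naturally revising by the conditional x>y yields [{xy}, {x¬y}, {¬xy, ¬x¬y}]; hence on this order natural revision by true>y and by x>y produce the same result. -/
open Classical

/-- the order `C_x = [{xy, x¬y}, {¬xy, ¬x¬y}]` over the alphabet `{x,y}`;
a model is a pair `(x, y)` of Boolean values. -/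
def Cx : Bool × Bool → ℕ := fun m => if m.1 then 0 else 1

/-- the formula `y` -/
def Yset : Set (Bool × Bool) := {m | m.2 = true}

/-- the formula `x` -/
def Xset : Set (Bool × Bool) := {m | m.1 = true}

/-- the order `[{xy}, {x¬y}, {¬xy, ¬x¬y}]` -/
def targetNat : Bool × Bool → ℕ := fun m =>
  if m.1 then (if m.2 then 0 else 1) else 2


lemma minidx_X : minidx Cx Xset = 0 := by
  rw [minidx, Nat.sInf_eq_zero]
  exact Or.inl ⟨(true, true), rfl, rfl⟩

lemma minidx_XY : minidx Cx (Xset ∩ Yset) = 0 := by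
  rw [minidx, Nat.sInf_eq_zero]
  exact Or.inl ⟨(true, true), ⟨rfl, rfl⟩, rfl⟩

lemma minidx_U : minidx Cx (Set.univ : Set (Bool × Bool)) = 0 := by
  rw [minidx, Nat.sInf_eq_zero]
  exact Or.inl ⟨(true, true), trivial, rfl⟩

lemma minidx_UY : minidx Cx (Set.univ ∩ Yset) = 0 := by
  rw [minidx, Nat.sInf_eq_zero]
  exact Or.inl ⟨(true, true), ⟨trivial, rfl⟩, rfl⟩

lemma natRevX_eval : ∀ I, natRev Cx Xset Yset I = targetNat I := by
  intro I
  simp only [natRev, minidx_X, minidx_XY]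
  rcases I with ⟨x, y⟩
  cases x <;> cases y <;> simp [Cx, Xset, Yset, targetNat, Set.mem_inter_iff]

lemma natRevU_eval : ∀ I, natRev Cx Set.univ Yset I = targetNat I := by
  intro I
  simp only [natRev, minidx_U, minidx_UY]
  rcases I with ⟨x, y⟩
  cases x <;> cases y <;> simp [Cx, Xset, Yset, targetNat, Set.mem_inter_iff]

/-- naturally revising `[{xy, x¬y}, {¬xy, ¬x¬y}]` by the conditional `x>y`
yields `[{xy}, {x¬y}, {¬xy, ¬x¬y}]`; hence on this order natural revision by `true>y`
and by `x>y` produce the same result. -/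
theorem natural_condition :
    sameOrd (natRev Cx Xset Yset) targetNat ∧
    sameOrd (natRev Cx Set.univ Yset) (natRev Cx Xset Yset) := by
  constructor <;> intro I J <;> simp only [natRevX_eval, natRevU_eval]
end

section
/- Line-down revision preserves conditionals: for any two models that either both satisfy ¬P, both satisfy P∧A, or both satisfy P∧¬A, their order in C dow(P>A) equals their order in C. -/
open Classical

/-- line-down revision preserves conditionals. -/
theorem down_preserves {M : Type*} [Fintype M] (r : M → ℕ) (P A : Set M) (I J : M)
    (h : (I ∈ Pᶜ ∧ J ∈ Pᶜ) ∨ (I ∈ P ∩ A ∧ J ∈ P ∩ A) ∨ (I ∈ P ∩ Aᶜ ∧ J ∈ P ∩ Aᶜ)) :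
    (r I ≤ r J ↔ dowRev r P A I ≤ dowRev r P A J) := by
  unfold dowRev
  by_cases hm : minidx r (P ∩ A) < minidx r (P ∩ Aᶜ)
  · simp [hm]
  · simp only [hm, if_false]
    push_neg at hm
    rcases h with ⟨hI, hJ⟩ | ⟨hI, hJ⟩ | ⟨hI, hJ⟩
    · have hI' : ¬(I ∈ P ∩ A ∧ r I = minidx r (P ∩ A)) := fun hc => hI hc.1.1
      have hJ' : ¬(J ∈ P ∩ A ∧ r J = minidx r (P ∩ A)) := fun hc => hJ hc.1.1
      rw [if_neg hI', if_neg hJ']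
      split_ifs <;> omega
    · have hmi : minidx r (P ∩ A) ≤ r I := Nat.sInf_le ⟨I, hI, rfl⟩
      have hmj : minidx r (P ∩ A) ≤ r J := Nat.sInf_le ⟨J, hJ, rfl⟩
      by_cases hri : r I = minidx r (P ∩ A) <;>
        by_cases hrj : r J = minidx r (P ∩ A)
      · have hIp : I ∈ P ∩ A ∧ r I = minidx r (P ∩ A) := ⟨hI, hri⟩
        have hJp : J ∈ P ∩ A ∧ r J = minidx r (P ∩ A) := ⟨hJ, hrj⟩
        rw [if_pos hIp, if_pos hJp]; omega
      · have hJ' : ¬(J ∈ P ∩ A ∧ r J = minidx r (P ∩ A)) := fun hc => hrj hc.2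
        have hIp : I ∈ P ∩ A ∧ r I = minidx r (P ∩ A) := ⟨hI, hri⟩
        rw [if_pos hIp, if_neg hJ']
        split_ifs <;> omega
      · have hI' : ¬(I ∈ P ∩ A ∧ r I = minidx r (P ∩ A)) := fun hc => hri hc.2
        have hJp : J ∈ P ∩ A ∧ r J = minidx r (P ∩ A) := ⟨hJ, hrj⟩
        rw [if_neg hI', if_pos hJp]
        split_ifs <;> omega
      · have hI' : ¬(I ∈ P ∩ A ∧ r I = minidx r (P ∩ A)) := fun hc => hri hc.2
        have hJ' : ¬(J ∈ P ∩ A ∧ r J = minidx r (P ∩ A)) := fun hc => hrj hc.2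
        rw [if_neg hI', if_neg hJ']
        split_ifs <;> omega
    · have hmi : minidx r (P ∩ Aᶜ) ≤ r I := Nat.sInf_le ⟨I, hI, rfl⟩
      have hmj : minidx r (P ∩ Aᶜ) ≤ r J := Nat.sInf_le ⟨J, hJ, rfl⟩
      have hI' : ¬(I ∈ P ∩ A ∧ r I = minidx r (P ∩ A)) := fun hc => hI.2 hc.1.2
      have hJ' : ¬(J ∈ P ∩ A ∧ r J = minidx r (P ∩ A)) := fun hc => hJ.2 hc.1.2
      rw [if_neg hI', if_neg hJ']
      split_ifs <;> omega
end

section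
/- If the natural revision sequence starting from the flat order, C_ε nat(P>A) nat(Q>B), falsifies P>A, then every model of P∧A satisfies Q∧¬B and every model of Q∧B satisfies P∧¬A. -/
open Classical

/-- if `C_ε nat(P>A) nat(Q>B)` falsifies `P>A` (starting from the flat
order), then every model of `P∧A` satisfies `Q∧¬B` and every model of `Q∧B` satisfies
`P∧¬A`. -/
theorem first_unsatisfied_inconsistent {M : Type*} [Fintype M] (P A Q B : Set M)
    (hPA : (P ∩ A).Nonempty) (hQB : (Q ∩ B).Nonempty)
    (h : ¬ satisfiesCond (natRev (natRev (fun _ : M => 0) P A) Q B) P A) :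
    P ∩ A ⊆ Q ∩ Bᶜ ∧ Q ∩ B ⊆ P ∩ Aᶜ := by
  classical
  obtain ⟨w, hwP, hwA⟩ := hPA
  have hm0 : minidx (fun _ : M => 0) P = 0 := by
    apply Nat.eq_zero_of_le_zero
    exact Nat.sInf_le ⟨w, hwP, rfl⟩
  have hm0' : minidx (fun _ : M => 0) (P ∩ A) = 0 := by
    apply Nat.eq_zero_of_le_zero
    exact Nat.sInf_le ⟨w, ⟨hwP, hwA⟩, rfl⟩
  set r1 : M → ℕ := fun I => if I ∈ P ∩ Aᶜ then 1 else 0 with hr1def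
  have hre : natRev (fun _ : M => 0) P A = r1 := by
    funext I
    simp [natRev, hm0, hm0', hr1def]
  rw [hre] at h
  have hr1PA : ∀ I ∈ P ∩ A, r1 I = 0 := by
    intro I hI
    simp only [hr1def]
    rw [if_neg]
    rintro ⟨-, hIA⟩
    exact hIA hI.2
  have hr1S : ∀ K ∈ P ∩ Aᶜ, r1 K = 1 := by
    intro K hK
    simp only [hr1def]
    rw [if_pos hK]
  by_cases hcase : ∀ x ∈ Q ∩ B, x ∈ P ∩ Aᶜ
  · -- every model of Q∧B is in P∧¬A
    obtain ⟨x, hx⟩ := hQB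
    have hn : minidx r1 (Q ∩ B) = 1 := by
      unfold minidx
      apply le_antisymm
      · exact Nat.sInf_le ⟨x, hx, hr1S x (hcase x hx)⟩
      · apply le_csInf (⟨1, ⟨x, hx, hr1S x (hcase x hx)⟩⟩ : (r1 '' (Q ∩ B)).Nonempty)
        rintro b ⟨y, hy, rfl⟩
        rw [hr1S y (hcase y hy)]
    have hmle : minidx r1 Q ≤ 1 := by
      have : r1 x = 1 := hr1S x (hcase x hx)
      calc minidx r1 Q ≤ r1 x := Nat.sInf_le ⟨x, hx.1, rfl⟩
        _ = 1 := this
    refine ⟨?_, hcase⟩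
    interval_cases hm : (minidx r1 Q)
    · -- m = 0, n = 1
      intro I0 hI0
      by_contra hI0n
      exfalso
      apply h
      intro I hI hmin K hK
      have hI0r : natRev r1 Q B I0 = 0 := by
        simp only [natRev, hm, hn, hr1PA I0 hI0]
        rw [if_neg (by omega), if_pos (by omega), if_neg hI0n]
      have hIr : natRev r1 Q B I ≤ 0 := by
        rw [← hI0r]; exact hmin I0 hI0
      have hKr : 1 ≤ natRev r1 Q B K := by
        simp only [natRev, hm, hn, hr1S K hK]
        split_ifs <;> omega
      omega
    · -- m = 1, n = 1 : order satisfies P>A, contradiction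
      exfalso
      apply h
      intro I hI hmin K hK
      have hIr : natRev r1 Q B I = 0 := by
        simp only [natRev, hm, hn, hr1PA I hI]
        rw [if_pos (by omega)]
      have hKr : 1 ≤ natRev r1 Q B K := by
        simp only [natRev, hm, hn, hr1S K hK]
        split_ifs <;> omega
      omega
  · -- some model of Q∧B outside P∧¬A : n = 0, m = 0, satisfies P>A, contradiction
    exfalso
    push_neg at hcase
    obtain ⟨x, hxQB, hxS⟩ := hcase
    have hxr : r1 x = 0 := by
      simp only [hr1def]
      rw [if_neg hxS]
    have hn : minidx r1 (Q ∩ B) = 0 :=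
      Nat.eq_zero_of_le_zero (le_trans (Nat.sInf_le ⟨x, hxQB, rfl⟩) (le_of_eq hxr))
    have hm : minidx r1 Q = 0 :=
      Nat.eq_zero_of_le_zero (le_trans (Nat.sInf_le ⟨x, hxQB.1, rfl⟩) (le_of_eq hxr))
    apply h
    intro I hI hmin K hK
    have hIr : natRev r1 Q B I ≤ 1 := by
      simp only [natRev, hm, hn, hr1PA I hI]
      split_ifs <;> omega
    have hKr : natRev r1 Q B K = 2 := by
      simp only [natRev, hm, hn, hr1S K hK]
      rw [if_neg (by omega), if_neg (by omega)]
    omega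
end

section
/- Natural revision is recalcitrant on the flat order: if there exists a connected preorder satisfying both P>A and Q>B, then C_ε nat(P>A) nat(Q>B) satisfies P>A. -/
open Classical

/-- natural revision is recalcitrant on the flat order: if some connected
preorder satisfies both `P>A` and `Q>B`, then `C_ε nat(P>A) nat(Q>B)` satisfies `P>A`. -/
theorem natural_recalcitrant {M : Type*} [Fintype M] (P A Q B : Set M)
    (hPA : (P ∩ A).Nonempty) (hQB : (Q ∩ B).Nonempty)
    (h : ∃ r' : M → ℕ, satisfiesCond r' P A ∧ satisfiesCond r' Q B) :
    satisfiesCond (natRev (natRev (fun _ : M => 0) P A) Q B) P A := by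
  obtain ⟨r', hP', hQ'⟩ := h
  have hPne : P.Nonempty := hPA.mono Set.inter_subset_left
  -- compute the first revision
  have h1 : minidx (fun _ : M => (0:ℕ)) P = 0 := by
    rw [minidx, Set.Nonempty.image_const hPne 0]; simp
  have h2 : minidx (fun _ : M => (0:ℕ)) (P ∩ A) = 0 := by
    rw [minidx, Set.Nonempty.image_const hPA 0]; simp
  set r1 : M → ℕ := fun I => if I ∈ P ∩ Aᶜ then 1 else 0 with hr1def
  have hr1 : natRev (fun _ : M => (0:ℕ)) P A = r1 := by
    funext I
    simp only [natRev, h1, h2, hr1def]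
    norm_num
  rw [hr1]
  have hr1le : ∀ X, r1 X ≤ 1 := by
    intro X; simp only [hr1def]; split <;> omega
  set q := minidx r1 Q with hq
  set b := minidx r1 (Q ∩ B) with hb
  obtain ⟨Jb, hJbQ, hJbval⟩ : ∃ J ∈ Q ∩ B, r1 J = b := by
    obtain ⟨x, hx, he⟩ := Nat.sInf_mem (hQB.image r1)
    exact ⟨x, hx, he⟩
  have hble : b ≤ 1 := hJbval ▸ hr1le Jb
  have hqb : q ≤ b := hJbval ▸ Nat.sInf_le (Set.mem_image_of_mem _ hJbQ.1)
  have hval : ∀ X, natRev r1 Q B X =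
      if r1 X < q then r1 X
      else if r1 X ≤ b then (if X ∈ Q ∩ Bᶜ then r1 X + (b - q + 1) else r1 X)
      else r1 X + (b - q + 1) := fun X => rfl
  intro I hI hImin K hK
  have hrI : r1 I = 0 := by
    simp only [hr1def]
    have : I ∉ P ∩ Aᶜ := fun hc => hc.2 hI.2
    simp [this]
  have hrK : r1 K = 1 := by simp only [hr1def]; simp [hK]
  rcases (by omega : b = 0 ∨ b = 1) with hb0 | hb1
  · -- b = 0, hence q = 0
    have hq0 : q = 0 := by omega
    rw [hval I, hval K, hrI, hrK, hb0, hq0]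
    norm_num
    split_ifs <;> omega
  · -- b = 1 : every model of Q∧B is in P∧¬A
    have hQBsub : ∀ X ∈ Q ∩ B, X ∈ P ∩ Aᶜ := by
      intro X hX
      have h1X : b ≤ r1 X := Nat.sInf_le (Set.mem_image_of_mem _ hX)
      by_contra hc
      simp only [hr1def] at h1X
      rw [if_neg hc] at h1X; omega
    rcases (by omega : q = 0 ∨ q = 1) with hq0 | hq1
    · -- q = 0
      by_cases hex : ∃ I0 ∈ P ∩ A, I0 ∉ Q ∩ Bᶜ
      · obtain ⟨I0, hI0, hI0n⟩ := hex
        have hrI0 : r1 I0 = 0 := by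
          simp only [hr1def]
          have : I0 ∉ P ∩ Aᶜ := fun hc => hc.2 hI0.2
          simp [this]
        have hvI0 : natRev r1 Q B I0 = 0 := by
          rw [hval I0, hrI0, hb1, hq0]
          simp [hI0n]
        have hle : natRev r1 Q B I ≤ 0 := hvI0 ▸ hImin I0 hI0
        have hvK : 1 ≤ natRev r1 Q B K := by
          rw [hval K, hrK, hb1, hq0]
          split_ifs <;> omega
        omega
      · -- P ∧ A ⊆ Q ∧ ¬B : contradiction with the existence of r'
        push_neg at hex
        exfalso
        obtain ⟨I0, hI0, hI0e⟩ := Nat.sInf_mem (hPA.image r')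
        have hI0min : ∀ J ∈ P ∩ A, r' I0 ≤ r' J := fun J hJ =>
          hI0e ▸ Nat.sInf_le (Set.mem_image_of_mem _ hJ)
        obtain ⟨J0, hJ0, hJ0e⟩ := Nat.sInf_mem (hQB.image r')
        have hJ0min : ∀ J ∈ Q ∩ B, r' J0 ≤ r' J := fun J hJ =>
          hJ0e ▸ Nat.sInf_le (Set.mem_image_of_mem _ hJ)
        have h3 : r' I0 < r' J0 := hP' I0 hI0 hI0min J0 (hQBsub J0 hJ0)
        have h4 : r' J0 < r' I0 := hQ' J0 hJ0 hJ0min I0 (hex I0 hI0)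
        omega
    · -- q = 1 : models of P∧A keep value 0
      have hvI : natRev r1 Q B I = 0 := by rw [hval I, hrI, hq1]; norm_num
      have hvK : 1 ≤ natRev r1 Q B K := by
        rw [hval K, hrK, hb1, hq1]
        split_ifs <;> omega
      omega
end

section
/- Line-down revision is not recalcitrant on the flat order: over the alphabet {x,y,z}, there is a connected preorder satisfying both x>y and true>(¬y∧¬z), yet C_ε dow(x>y) dow(true>(¬y∧¬z)) falsifies x>y. -/
open Classical

/-- the formula `x` over the alphabet `{x,y,z}`; a model is `(x,(y,z))` -/
def P10 : Set (Bool × Bool × Bool) := {m | m.1 = true}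

/-- the formula `y` -/
def A10 : Set (Bool × Bool × Bool) := {m | m.2.1 = true}

/-- the formula `¬y ∧ ¬z` -/
def B10 : Set (Bool × Bool × Bool) := {m | m.2.1 = false ∧ m.2.2 = false}

noncomputable def r1ex : Bool × Bool × Bool → ℕ :=
  fun I => if I ∈ P10 ∩ A10 then 0 else 1

noncomputable def r2ex : Bool × Bool × Bool → ℕ :=
  fun I => if I ∈ B10 then 0 else r1ex I + 1

lemma min1 : minidx (fun _ : Bool × Bool × Bool => 0) (P10 ∩ A10) = 0 := by
  rw [minidx, Nat.sInf_eq_zero]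
  left
  exact ⟨(true, true, true), ⟨rfl, rfl⟩, rfl⟩

lemma min2 : minidx (fun _ : Bool × Bool × Bool => 0) (P10 ∩ A10ᶜ) = 0 := by
  rw [minidx, Nat.sInf_eq_zero]
  left
  refine ⟨(true, false, true), ⟨rfl, ?_⟩, rfl⟩
  simp [A10]

lemma step1 : dowRev (fun _ : Bool × Bool × Bool => 0) P10 A10 = r1ex := by
  funext I
  simp only [dowRev, min1, min2, r1ex, lt_irrefl, if_false]
  by_cases h : I ∈ P10 ∩ A10 <;> simp [h]

lemma r1B : ∀ I : Bool × Bool × Bool, I ∈ B10 → r1ex I = 1 := by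
  intro I hI
  have : I ∉ P10 ∩ A10 := by
    intro h
    simp only [Set.mem_inter_iff, P10, A10, Set.mem_setOf_eq] at h
    simp only [B10, Set.mem_setOf_eq] at hI
    rw [hI.1] at h; exact Bool.false_ne_true h.2
  simp [r1ex, this]

lemma min3 : minidx r1ex (Set.univ ∩ B10) = 1 := by
  have himg : r1ex '' (Set.univ ∩ B10) = {1} := by
    apply Set.eq_singleton_iff_unique_mem.mpr
    constructor
    · exact ⟨(false, false, false), ⟨trivial, ⟨rfl, rfl⟩⟩, r1B _ ⟨rfl, rfl⟩⟩
    · rintro n ⟨I, ⟨-, hI⟩, rfl⟩; exact r1B I hI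
  rw [minidx, himg]; simp

lemma min4 : minidx r1ex (Set.univ ∩ B10ᶜ) = 0 := by
  rw [minidx, Nat.sInf_eq_zero]
  left
  refine ⟨(true, true, true), ⟨trivial, ?_⟩, by simp [r1ex, P10, A10]⟩
  simp [B10]

lemma step2 : dowRev r1ex Set.univ B10 = r2ex := by
  funext I
  simp only [dowRev, min3, min4, r2ex]
  by_cases h : I ∈ B10
  · simp [h, r1B I h]
  · have h1 : ¬ (I ∈ Set.univ ∩ B10 ∧ r1ex I = 1) := by
      rintro ⟨⟨-, hB⟩, -⟩; exact h hB
    simp [h1, h]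

/-- line-down revision is not recalcitrant on the flat order: some
connected preorder satisfies both `x>y` and `true>(¬y∧¬z)`, yet
`C_ε dow(x>y) dow(true>(¬y∧¬z))` falsifies `x>y`. -/
theorem down_recalcitrant_not :
    (∃ r' : Bool × Bool × Bool → ℕ,
        satisfiesCond r' P10 A10 ∧ satisfiesCond r' Set.univ B10) ∧
    ¬ satisfiesCond
        (dowRev (dowRev (fun _ : Bool × Bool × Bool => 0) P10 A10) Set.univ B10)
        P10 A10 := by
  constructor
  · refine ⟨fun I => if I = (false, false, false) then 0 else
      if I.1 = true ∧ I.2.1 = false then 2 else 1, ?_, ?_⟩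
    · simp only [satisfiesCond, Set.mem_inter_iff, Set.mem_compl_iff,
        Set.mem_setOf_eq, P10, A10]
      decide
    · simp only [satisfiesCond, Set.mem_inter_iff, Set.mem_compl_iff,
        Set.mem_setOf_eq, Set.mem_univ, B10]
      decide
  · rw [step1, step2]
    intro h
    have := h (true, true, true) ⟨rfl, rfl⟩ ?_ (true, false, false) ?_
    · simp [r2ex, B10, r1ex, P10, A10] at this
    · intro J hJ
      simp only [r2ex, r1ex]
      have hJB : J ∉ B10 := by
        simp only [Set.mem_inter_iff, P10, A10, Set.mem_setOf_eq] at hJ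
        intro hB; simp only [B10, Set.mem_setOf_eq] at hB
        rw [hJ.2] at hB; simp [hJ.2] at hB
      simp [hJB, hJ, show ((true,true,true) : Bool×Bool×Bool) ∉ B10 by simp [B10],
        show ((true,true,true) : Bool×Bool×Bool) ∈ P10 ∩ A10 from ⟨rfl, rfl⟩]
    · constructor
      · rfl
      · simp [A10]
end

section
/- Natural revision changes the order no more than uncontingent revision: for every connected preorder C and conditional P>A, diff(C nat(P>A), C) ⊆ diff(C unc(P>A), C). -/
open Classical

/-- natural revision changes the order no more than uncontingent
revision: `diff(C nat(P>A), C) ⊆ diff(C unc(P>A), C)`. -/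
theorem natural_lesschange_uncontingent {M : Type*} [Fintype M] (r : M → ℕ)
    (P A : Set M) :
    diffOrd (natRev r P A) r ⊆ diffOrd (uncRev r P A) r := by
  rintro ⟨I, J⟩ hp
  by_cases hPA : (P ∩ A).Nonempty
  · -- main facts: minidx r P ≤ minidx r (P∩A) ≤ maxidx r (P∩A)
    have himg : (r '' (P ∩ A)).Nonempty := hPA.image r
    have hmem : minidx r (P ∩ A) ∈ r '' (P ∩ A) := Nat.sInf_mem himg
    have hma : minidx r P ≤ minidx r (P ∩ A) := by
      obtain ⟨y, hy, hry⟩ := hmem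
      rw [← hry]
      exact Nat.sInf_le ⟨y, hy.1, rfl⟩
    have hab : minidx r (P ∩ A) ≤ maxidx r (P ∩ A) :=
      le_csSup (Set.Finite.bddAbove (Set.toFinite _)) hmem
    simp only [diffOrd, Set.mem_symmDiff, ordRel, Set.mem_setOf_eq] at hp ⊢
    by_cases hI : I ∈ P ∩ Aᶜ <;> by_cases hJ : J ∈ P ∩ Aᶜ <;>
      simp only [natRev, uncRev, hI, hJ, if_true, if_false] at hp ⊢ <;>
      split_ifs at hp ⊢ <;> omega
  · have hempty : P ∩ A = ∅ := Set.not_nonempty_iff_eq_empty.mp hPA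
    have ha : minidx r (P ∩ A) = 0 := by
      simp [minidx, hempty, Nat.sInf_empty]
    have hb : maxidx r (P ∩ A) = 0 := by
      simp [maxidx, hempty]
    have heq : natRev r P A = uncRev r P A := by
      funext K; simp only [natRev, uncRev, ha, hb]
    rw [heq] at hp
    exact hp
end

section
/- Uncontingent revision is the minimal change satisfying all relativized conditionals: no connected preorder that satisfies RP>A for every formula R consistent with P∧A is strictly closer to C than C unc(P>A). -/
open Classical

/-- no connected preorder that satisfies `R∧P>A` for every formula `R`
consistent with `P∧A` is strictly closer to `C` than the uncontingent revision
`C unc(P>A)`. -/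
theorem uncontingent_minimal {M : Type*} [Fintype M] (r : M → ℕ) (P A : Set M)
    (h : (P ∩ A).Nonempty) :
    ¬ ∃ r' : M → ℕ,
        (∀ R : Set M, (R ∩ P ∩ A).Nonempty → satisfiesCond r' (R ∩ P) A) ∧
        diffOrd r' r ⊂ diffOrd (uncRev r P A) r := by
  rintro ⟨r', hcond, hdiff⟩
  obtain ⟨hsub, hne⟩ := hdiff
  set mp := minidx r P with hmpdef
  set ma := maxidx r (P ∩ A) with hmadef
  -- a witness attaining the maximum
  have hbdd : BddAbove (r '' (P ∩ A)) := ((P ∩ A).toFinite.image r).bddAbove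
  obtain ⟨K0, hK0mem, hK0⟩ : ∃ K0 ∈ P ∩ A, r K0 = ma := Nat.sSup_mem (h.image r) hbdd
  have hma : mp ≤ ma := by
    have : mp ≤ r K0 := Nat.sInf_le (Set.mem_image_of_mem r hK0mem.1)
    omega
  -- membership in diffOrd, unfolded
  have hdiffmem : ∀ (f g : M → ℕ) (I J : M), (I, J) ∈ diffOrd f g ↔
      ((f I ≤ f J ∧ ¬ g I ≤ g J) ∨ (g I ≤ g J ∧ ¬ f I ≤ f J)) := by
    intro f g I J
    simp [diffOrd, ordRel, Set.mem_symmDiff]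
  -- case analysis on the value of uncRev
  have hBcase : ∀ I : M,
      (uncRev r P A I = r I ∧ ¬(I ∈ P ∧ I ∉ A ∧ mp ≤ r I ∧ r I ≤ ma) ∧ r I ≤ ma)
      ∨ (uncRev r P A I = r I + (ma - mp + 1) ∧
          ((I ∈ P ∧ I ∉ A ∧ mp ≤ r I ∧ r I ≤ ma) ∨ ma < r I)) := by
    intro I
    unfold uncRev
    rw [← hmpdef, ← hmadef]
    by_cases h1 : r I < mp
    · rw [if_pos h1]
      exact Or.inl ⟨rfl, fun ⟨_, _, h2, _⟩ => absurd h1 (not_lt.mpr h2), by omega⟩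
    · rw [if_neg h1]
      by_cases h2 : r I ≤ ma
      · rw [if_pos h2]
        by_cases h3 : I ∈ P ∩ Aᶜ
        · rw [if_pos h3]
          exact Or.inr ⟨rfl, Or.inl ⟨h3.1, h3.2, le_of_not_gt h1, h2⟩⟩
        · rw [if_neg h3]
          exact Or.inl ⟨rfl, fun ⟨a, b, _, _⟩ => h3 ⟨a, b⟩, h2⟩
      · rw [if_neg h2]
        exact Or.inr ⟨rfl, Or.inr (lt_of_not_ge h2)⟩
  -- key consequence of the conditionals: every model of P∧A is strictly below
  -- every model of P∧¬A in r'
  have star : ∀ I ∈ P, I ∉ A → ∀ K ∈ P ∩ A, r' K < r' I := by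
    intro I hIP hIA K hK
    have hne' : (({I, K} : Set M) ∩ P ∩ A).Nonempty :=
      ⟨K, ⟨Set.mem_insert_of_mem _ rfl, hK.1⟩, hK.2⟩
    have h1 := hcond {I, K} hne'
    refine h1 K ⟨⟨Set.mem_insert_of_mem _ rfl, hK.1⟩, hK.2⟩ ?_ I
      ⟨⟨Set.mem_insert _ _, hIP⟩, hIA⟩
    intro J hJ
    rcases Set.mem_insert_iff.mp hJ.1.1 with hJI | hJK
    · exact absurd (hJI ▸ hJ.2) hIA
    · rw [Set.mem_singleton_iff.mp hJK]
  -- main claim: dropped models end up strictly above kept low models in r'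
  have key : ∀ X Y : M, X ∈ P → X ∉ A → mp ≤ r X → r X ≤ ma →
      ¬(Y ∈ P ∧ Y ∉ A ∧ mp ≤ r Y ∧ r Y ≤ ma) → r Y ≤ ma → r X ≤ r Y →
      r' Y < r' X := by
    intro X Y hXP hXA hX1 _ hYnB hY hXY
    by_cases hYA : Y ∈ P ∩ A
    · exact star X hXP hXA Y hYA
    · have hYP : Y ∉ P := by
        intro hYP
        by_cases hA : Y ∈ A
        · exact hYA ⟨hYP, hA⟩
        · exact hYnB ⟨hYP, hA, le_trans hX1 hXY, hY⟩
      -- (Y, K0) is not flipped by uncRev, hence not by r'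
      have eY : uncRev r P A Y = r Y := by
        rcases hBcase Y with ⟨eY, _, _⟩ | ⟨_, hc⟩
        · exact eY
        · rcases hc with ⟨hp', _⟩ | hlt
          · exact absurd hp' hYP
          · omega
      have eK : uncRev r P A K0 = r K0 := by
        rcases hBcase K0 with ⟨eK, _, _⟩ | ⟨_, hc⟩
        · exact eK
        · rcases hc with ⟨_, hnA, _⟩ | hlt
          · exact absurd hK0mem.2 hnA
          · omega
      have hrYK : r Y ≤ r K0 := by omega
      have hnd : (Y, K0) ∉ diffOrd (uncRev r P A) r := by
        rw [hdiffmem, eY, eK]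
        omega
      have hYK : r' Y ≤ r' K0 := by
        by_contra hc
        exact hnd (hsub ((hdiffmem r' r Y K0).mpr (Or.inr ⟨hrYK, hc⟩)))
      exact lt_of_le_of_lt hYK (star X hXP hXA K0 hK0mem)
  -- derive the contradiction: diffOrd (uncRev) r ⊆ diffOrd r' r
  apply hne
  intro p hp
  obtain ⟨I, J⟩ := p
  rw [hdiffmem] at hp ⊢
  rcases hBcase I with ⟨eI, hnBI, hIle⟩ | ⟨eI, hI2⟩ <;>
    rcases hBcase J with ⟨eJ, hnBJ, hJle⟩ | ⟨eJ, hJ2⟩ <;>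
    rw [eI, eJ] at hp
  · omega
  · -- I kept low, J dropped or high
    have hJI : r J < r I := by omega
    have hBJ : J ∈ P ∧ J ∉ A ∧ mp ≤ r J ∧ r J ≤ ma := by
      rcases hJ2 with hB | hlt
      · exact hB
      · omega
    have := key J I hBJ.1 hBJ.2.1 hBJ.2.2.1 hBJ.2.2.2 hnBI hIle (le_of_lt hJI)
    exact Or.inl ⟨le_of_lt this, by omega⟩
  · -- I dropped or high, J kept low
    have hIJ : r I ≤ r J := by omega
    have hBI : I ∈ P ∧ I ∉ A ∧ mp ≤ r I ∧ r I ≤ ma := by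
      rcases hI2 with hB | hlt
      · exact hB
      · omega
    have := key I J hBI.1 hBI.2.1 hBI.2.2.1 hBI.2.2.2 hnBJ hJle hIJ
    exact Or.inr ⟨hIJ, by omega⟩
  · omega
end

section
/- The contingent context of natural revision: for every connected preorder C and conditional P>A with P∧A satisfiable, C nat(P>A) = C unc(Q>A) where Q is P restricted to the models in classes up to minidx(P∧A), i.e., Q = P ∧ (≤min(P∧A)). -/
open Classical

/- Cutting `P` down to `Q = P ∧ (≤min(P∧A))` keeps `minidx P`, and all models of `Q∧A` sit in the
single class `minidx(P∧A)`, so `maxidx(Q∧A) = minidx(P∧A)`. Hence the two revisions shift exactly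
the same models by the same amount, and `C nat(P>A)` and `C unc(Q>A)` have the same rank function. -/

section Index

variable {M : Type*} {r : M → ℕ} {F : Set M}

lemma minidx_le {I : M} (hI : I ∈ F) : minidx r F ≤ r I :=
  Nat.sInf_le ⟨I, hI, rfl⟩

lemma exists_rank_eq_minidx (hF : F.Nonempty) : ∃ I ∈ F, r I = minidx r F :=
  Nat.sInf_mem (hF.image r)

lemma maxidx_eq_of_image_eq_singleton {n : ℕ} (h : r '' F = {n}) : maxidx r F = n := by
  rw [maxidx, h, csSup_singleton]

lemma minidx_inter_setOf_rank_le {n : ℕ} (h : ∃ I ∈ F, r I ≤ n) :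
    minidx r (F ∩ {I | r I ≤ n}) = minidx r F := by
  obtain ⟨I, hIF, hIn⟩ := h
  obtain ⟨I₁, hI₁F, hI₁⟩ := exists_rank_eq_minidx (r := r) ⟨I, hIF⟩
  have hI₁n : I₁ ∈ F ∩ {I | r I ≤ n} := ⟨hI₁F, hI₁.trans_le ((minidx_le hIF).trans hIn)⟩
  obtain ⟨J, hJ, hJmin⟩ := exists_rank_eq_minidx (r := r) ⟨I₁, hI₁n⟩
  exact le_antisymm (hI₁ ▸ minidx_le hI₁n) (hJmin ▸ minidx_le hJ.1)

lemma image_inter_setOf_rank_le_minidx (hF : F.Nonempty) :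
    r '' (F ∩ {I | r I ≤ minidx r F}) = {minidx r F} := by
  ext n
  constructor
  · rintro ⟨J, ⟨hJF, hJle⟩, rfl⟩
    exact le_antisymm hJle (minidx_le hJF)
  · rintro rfl
    obtain ⟨I, hIF, hI⟩ := exists_rank_eq_minidx (r := r) hF
    exact ⟨I, ⟨hIF, hI.le⟩, hI⟩

end Index

lemma natRev_eq_uncRev_inter {M : Type*} (r : M → ℕ) (P A : Set M) (h : (P ∩ A).Nonempty) :
    natRev r P A = uncRev r (P ∩ {I : M | r I ≤ minidx r (P ∩ A)}) A := by
  have hQ : minidx r (P ∩ {I | r I ≤ minidx r (P ∩ A)}) = minidx r P := by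
    obtain ⟨I, hI, hIm⟩ := exists_rank_eq_minidx (r := r) h
    exact minidx_inter_setOf_rank_le ⟨I, hI.1, hIm.le⟩
  have hQA : r '' (P ∩ {I | r I ≤ minidx r (P ∩ A)} ∩ A) = {minidx r (P ∩ A)} := by
    rw [Set.inter_right_comm]
    exact image_inter_setOf_rank_le_minidx h
  funext I
  simp only [natRev, uncRev, hQ, maxidx_eq_of_image_eq_singleton hQA]
  by_cases hIm : r I ≤ minidx r (P ∩ A) <;> simp [hIm]

theorem contingent_context_general {M : Type*} (r : M → ℕ) (P A : Set M)
    (h : (P ∩ A).Nonempty) :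
    sameOrd (natRev r P A)
      (uncRev r (P ∩ {I : M | r I ≤ minidx r (P ∩ A)}) A) := by
  rw [← natRev_eq_uncRev_inter r P A h]
  exact fun _ _ => Iff.rfl

/-- the contingent context of natural revision:
`C nat(P>A) = C unc(Q>A)` where `Q = P ∧ (≤min(P∧A))`. -/
theorem contingent_context {M : Type*} [Fintype M] (r : M → ℕ) (P A : Set M)
    (h : (P ∩ A).Nonempty) :
    sameOrd (natRev r P A)
      (uncRev r (P ∩ {I : M | r I ≤ minidx r (P ∩ A)}) A) :=
  contingent_context_general r P A h
end

section
/- Uncontingent revision of a trivial conditional equals lexicographic revision: for every connected preorder C and satisfiable formula A, C unc(true>A) = C lex(A). -/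
open Classical

/-- `C unc(true>A) = C lex(A)` for every satisfiable formula `A`. -/
theorem lexicographic_uncontingent {M : Type*} [Fintype M] (r : M → ℕ) (A : Set M)
    (hA : A.Nonempty) :
    sameOrd (uncRev r Set.univ A) (lexRev r A) := by
  have hmax : ∀ K ∈ A, r K ≤ maxidx r (Set.univ ∩ A) := by
    intro K hK
    exact le_csSup ((Set.toFinite _).bddAbove) ⟨K, ⟨trivial, hK⟩, rfl⟩
  have hmin : ∀ K : M, minidx r Set.univ ≤ r K := fun K =>
    csInf_le (OrderBot.bddBelow _) ⟨K, trivial, rfl⟩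
  have hsup : ∀ K : M, r K ≤ Finset.univ.sup r := fun K =>
    Finset.le_sup (Finset.mem_univ K)
  have key : ∀ K, uncRev r Set.univ A K =
      if K ∈ A then r K
      else r K + (maxidx r (Set.univ ∩ A) - minidx r Set.univ + 1) := by
    intro K
    unfold uncRev
    rw [if_neg (by simpa [Nat.not_lt] using hmin K)]
    by_cases hK : K ∈ A
    · rw [if_pos (hmax K hK), if_neg (by simp [hK]), if_pos hK]
    · by_cases h2 : r K ≤ maxidx r (Set.univ ∩ A)
      · rw [if_pos h2, if_pos (by simp [hK]), if_neg hK]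
      · rw [if_neg h2, if_neg hK]
  intro I J
  rw [key I, key J]
  unfold lexRev
  have h3 := hmin I
  have h4 := hmin J
  obtain ⟨a, ha⟩ := hA
  have h5 := le_trans (hmin a) (hmax a ha)
  by_cases hI : I ∈ A <;> by_cases hJ : J ∈ A <;>
    simp only [hI, hJ, if_pos, if_neg, not_false_iff, if_true, if_false]
  · have := hmax I hI
    have := hsup I
    omega
  · have := hmax J hJ
    have := hsup J
    omega
  · omega
end
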